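/- Uniform slope bound under the sufficient condition for global optimization: Let ψ : ℝ → ℝ be continuously differentiable and 1-periodic, let C, σ, γ, c₀ > 0, let ζ be a regularizer, and let N ≥ 1, h = 1/N, δ ≤ c₀·h, ρ > 0. Suppose φ̄ ∈ (0, π/2) satisfies (1/√(2Cσ))·[σ + 4γ·(∫₀¹ √(1 + ψ'(x)²) dx + c₀)] + arctan(sup_{x∈[0,1]} |ψ'(x)| + 2c₀) ≤ φ̄. Then every discrete curve v with E_{h,δ,ρ}[v] ≤ σ for which there exists an index j₁ with ζ_δ(v_{j₁−1} − ψ(x_{j₁−1}))·ζ_δ(v_{j₁} − ψ(x_{j₁})) > 0 satisfies max_j |d_j| ≤ tan φ̄. -/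

import Mathlib

open Filter MeasureTheory

noncomputable section

/-- mesh point `x_j = j·h` with `h = 1/N`. -/
def xj (N : ℕ) (j : ℤ) : ℝ := j * ((1 : ℝ) / N)

/-- first difference quotient `d_j = (v_j − v_{j−1})/h`. -/
def dq (N : ℕ) (v : ℤ → ℝ) (j : ℤ) : ℝ := (v j - v (j - 1)) / ((1 : ℝ) / N)

/-- second difference quotient `D_j = (v_{j+1} − 2v_j + v_{j−1})/h²`. -/
def Dq (N : ℕ) (v : ℤ → ℝ) (j : ℤ) : ℝ :=
  (v (j + 1) - 2 * v j + v (j - 1)) / ((1 : ℝ) / N) ^ 2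

/-- half segment length `l_j = (h/2)·√(1 + d_j²)`. -/
def lq (N : ℕ) (v : ℤ → ℝ) (j : ℤ) : ℝ :=
  ((1 : ℝ) / N) / 2 * Real.sqrt (1 + dq N v j ^ 2)

/-- angle `θ_j` between consecutive segments. -/
def θq (N : ℕ) (v : ℤ → ℝ) (j : ℤ) : ℝ :=
  Real.arccos ((1 + dq N v j * dq N v (j + 1)) /
    (Real.sqrt (1 + dq N v j ^ 2) * Real.sqrt (1 + dq N v (j + 1) ^ 2)))

/-- discrete bending energy `B_h`. -/
def Bh (C : ℝ) (N : ℕ) (v : ℤ → ℝ) : ℝ :=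
  C / 2 * ∑ j ∈ Finset.Icc (1 : ℤ) N, θq N v j ^ 2 *
    ((lq N v j ^ 3 + lq N v (j + 1) ^ 3) /
      (lq N v j * lq N v (j + 1) * (lq N v j + lq N v (j + 1)) ^ 2))

/-- discrete tension `T_h`. -/
def Th (σ : ℝ) (N : ℕ) (v : ℤ → ℝ) : ℝ :=
  σ * ∑ j ∈ Finset.Icc (1 : ℤ) N, 2 * lq N v j

/-- a regularizer `ζ`. -/
def IsRegularizer (ζ : ℝ → ℝ) : Prop :=
  ContDiff ℝ 1 ζ ∧ (∀ t, 0 ≤ ζ t ∧ ζ t ≤ 1) ∧ (∀ t, ζ (-t) = ζ t) ∧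
    (∀ t, 1 < t → ζ t = 0) ∧ AntitoneOn ζ (Set.Icc 0 1) ∧ ζ 0 = 1

/-- discrete adhesion energy `A_{h,δ}` (with `ζ_δ(t) = ζ(t/δ)`). -/
def Ah (γ : ℝ) (ζ : ℝ → ℝ) (δ : ℝ) (ψ : ℝ → ℝ) (N : ℕ) (v : ℤ → ℝ) : ℝ :=
  γ * ∑ j ∈ Finset.Icc (1 : ℤ) N,
    ζ ((v (j - 1) - ψ (xj N (j - 1))) / δ) * ζ ((v j - ψ (xj N j)) / δ) * (2 * lq N v j)

/-- discrete penalty `P_{h,ρ}`. -/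
def Ph (ρ : ℝ) (ψ : ℝ → ℝ) (N : ℕ) (v : ℤ → ℝ) : ℝ :=
  1 / ρ * ∑ j ∈ Finset.Icc (1 : ℤ) N, max (ψ (xj N j) - v j) 0 ^ 2 * ((1 : ℝ) / N)

/-- total discrete energy `E_{h,δ,ρ}`. -/
def Eh (C σ γ : ℝ) (ζ ψ : ℝ → ℝ) (N : ℕ) (δ ρ : ℝ) (v : ℤ → ℝ) : ℝ :=
  Bh C N v + Th σ N v - Ah γ ζ δ ψ N v + Ph ρ ψ N v

/-- piecewise-affine interpolant of a discrete curve: on `[x_{j−1}, x_j]` it is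
`v_{j−1} + d_j·(x − x_{j−1})`. -/
def interp (N : ℕ) (v : ℤ → ℝ) (x : ℝ) : ℝ :=
  v (⌈x * N⌉ - 1) + dq N v ⌈x * N⌉ * (x - xj N (⌈x * N⌉ - 1))

/-- slope step function of a discrete curve: equal to `d_j` on `(x_{j−1}, x_j)`. -/
def slopeFn (N : ℕ) (v : ℤ → ℝ) (x : ℝ) : ℝ := dq N v ⌈x * N⌉

/-!
The bending energy controls the total turning `∑ θ_j = ∑ |arctan d_{j+1} - arctan d_j|` of the
curve: Titu's form of Cauchy–Schwarz gives `C (∑ θ_j)² ≤ 4 B_h Λ` with `Λ = ∑ l_j`, and AM–GM turns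
this into `(∑ θ_j) √(2Cσ) ≤ B_h + T_h`. A segment whose two ends lie within `δ` of the obstacle is
at most `2δ` longer than the arc of the graph of `ψ` above it, so the adhesion energy is at most
`γ (∫₀¹ √(1 + ψ'²) + 2Nδ)`; with `E ≤ σ` and `P ≥ 0` this bounds the total turning. On an adhered
segment the slope is at most `sup |ψ'| + 2c₀`, and by periodicity the angle `arctan d_j` of any
segment differs from that of the adhered one by at most the total turning.
-/

section General

open Finset Function

theorem sum_Ico_add_one_sub_int {M : Type*} [AddCommGroup M] (f : ℤ → M) {a b : ℤ} (hab : a ≤ b) :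
    ∑ i ∈ Ico a b, (f (i + 1) - f i) = f b - f a := by
  induction b, hab using Int.leInduction with
  | base => simp
  | succ b hab ih =>
    rw [← insert_Ico_right_eq_Ico_add_one hab, sum_insert (by simp), ih]
    abel

theorem abs_sub_le_sum_Ico_abs_sub (f : ℤ → ℝ) {a b : ℤ} (hab : a ≤ b) :
    |f b - f a| ≤ ∑ i ∈ Ico a b, |f (i + 1) - f i| :=
  sum_Ico_add_one_sub_int f hab ▸ abs_sum_le_sum_abs _ _

theorem Function.Periodic.sum_Icc_comp_add_one {M : Type*} [AddCommGroup M] {g : ℤ → M}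
    {N : ℕ} (hg : Periodic g N) :
    ∑ j ∈ Icc (1 : ℤ) N, g (j + 1) = ∑ j ∈ Icc (1 : ℤ) N, g j := by
  rw [← sub_eq_zero, ← sum_sub_distrib, ← Ico_add_one_right_eq_Icc,
    sum_Ico_add_one_sub_int g (by omega), add_comm, hg, sub_self]

theorem Function.Periodic.exists_eq_mem_Icc {α : Type*} {f : ℤ → α} {N : ℕ} (hf : Periodic f N)
    (hN : 0 < N) (k : ℤ) : ∃ r ∈ Icc (1 : ℤ) N, f k = f r := by
  obtain ⟨y, hy, hfy⟩ := (hf.add_const 1).exists_mem_Ico₀ (by omega) (k - 1)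
  refine ⟨y + 1, ?_, by simpa using hfy⟩
  simp only [Set.mem_Ico] at hy
  simp only [mem_Icc]
  omega

theorem Function.Periodic.abs_sub_le_sum_Icc {f : ℤ → ℝ} {N : ℕ} (hf : Periodic f N)
    (hN : 0 < N) (i j : ℤ) : |f j - f i| ≤ ∑ k ∈ Icc (1 : ℤ) N, |f (k + 1) - f k| := by
  obtain ⟨r, hr, hir⟩ := hf.exists_eq_mem_Icc hN i
  obtain ⟨s, hs, hjs⟩ := hf.exists_eq_mem_Icc hN j
  rw [hir, hjs]
  clear hir hjs
  wlog hrs : r ≤ s generalizing r s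
  · rw [abs_sub_comm]
    exact this s hs r hr (by omega)
  refine (abs_sub_le_sum_Ico_abs_sub f hrs).trans
    (sum_le_sum_of_subset_of_nonneg (fun k hk => ?_) fun _ _ _ => abs_nonneg _)
  simp only [mem_Ico, mem_Icc] at hk hr hs ⊢
  omega

theorem Function.Periodic.deriv {f : ℝ → ℝ} {c : ℝ} (hf : Periodic f c) : Periodic (deriv f) c :=
  fun x => by simpa only [hf.funext] using (deriv_comp_add_const f c x).symm

theorem Function.Periodic.le_sSup_image_Icc {g : ℝ → ℝ} {c : ℝ} (hg : Periodic g c) (hc : 0 < c)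
    (hcont : Continuous g) (x : ℝ) : g x ≤ sSup (g '' Set.Icc 0 c) := by
  obtain ⟨y, hy, hxy⟩ := hg.exists_mem_Ico₀ hc x
  exact hxy ▸ le_csSup (isCompact_Icc.image hcont).bddAbove ⟨y, Set.Ico_subset_Icc_self hy, rfl⟩

end General

section GraphLength

open Complex intervalIntegral

theorem sqrt_sq_add_sq_le_integral_sqrt_one_add_deriv_sq {ψ : ℝ → ℝ} (hψ : ContDiff ℝ 1 ψ)
    {a b : ℝ} (hab : a ≤ b) :
    √((b - a) ^ 2 + (ψ b - ψ a) ^ 2) ≤ ∫ x in a..b, √(1 + deriv ψ x ^ 2) := by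
  let graph : ℝ → ℂ := fun x => x + ψ x * I
  have hgraph : ∀ x, HasDerivAt graph (((1 : ℝ) : ℂ) + deriv ψ x * I) x := fun x =>
    (hasDerivAt_id x).ofReal_comp.add
      ((hψ.differentiable one_ne_zero x).hasDerivAt.ofReal_comp.mul_const I)
  have hcont : Continuous fun x => ((1 : ℝ) : ℂ) + deriv ψ x * I := by
    have := hψ.continuous_deriv le_rfl
    fun_prop
  calc √((b - a) ^ 2 + (ψ b - ψ a) ^ 2) = ‖graph b - graph a‖ := by
        rw [← norm_add_mul_I]; simp only [graph]; push_cast; ring_nf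
    _ = ‖∫ x in a..b, (((1 : ℝ) : ℂ) + deriv ψ x * I)‖ := by
        rw [integral_eq_sub_of_hasDerivAt (fun x _ => hgraph x) (hcont.intervalIntegrable _ _)]
    _ ≤ ∫ x in a..b, ‖((1 : ℝ) : ℂ) + deriv ψ x * I‖ := norm_integral_le_integral_norm hab
    _ = ∫ x in a..b, √(1 + deriv ψ x ^ 2) := by simp only [norm_add_mul_I, one_pow]

theorem sqrt_sq_add_sq_le_sqrt_sq_add_sq_add_abs_sub (x y z : ℝ) :
    √(x ^ 2 + y ^ 2) ≤ √(x ^ 2 + z ^ 2) + |y - z| := by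
  have hyz : ‖((y - z : ℝ) : ℂ) * I‖ = |y - z| := by
    rw [norm_mul, norm_I, mul_one, norm_real, Real.norm_eq_abs]
  rw [← norm_add_mul_I, ← norm_add_mul_I, ← hyz]
  calc ‖(x : ℂ) + y * I‖ = ‖((x : ℂ) + z * I) + ((y - z : ℝ) : ℂ) * I‖ := by push_cast; ring_nf
    _ ≤ _ := norm_add_le _ _

end GraphLength

section Trigonometry

open Real

theorem arccos_div_sqrt_eq_abs_arctan_sub (a b : ℝ) :
    arccos ((1 + a * b) / (√(1 + a ^ 2) * √(1 + b ^ 2))) = |arctan b - arctan a| := by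
  have hcos : (1 + a * b) / (√(1 + a ^ 2) * √(1 + b ^ 2)) = cos (arctan b - arctan a) := by
    rw [cos_sub, cos_arctan, cos_arctan, sin_arctan, sin_arctan]
    field_simp
  rw [hcos, ← cos_abs, arccos_cos (abs_nonneg _)]
  have := neg_pi_div_two_lt_arctan a
  have := arctan_lt_pi_div_two b
  have := neg_pi_div_two_lt_arctan b
  have := arctan_lt_pi_div_two a
  rw [abs_sub_le_iff]
  constructor <;> linarith

theorem abs_arctan (x : ℝ) : |arctan x| = arctan |x| := by
  rcases abs_cases x with ⟨hx, h0⟩ | ⟨hx, h0⟩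
  · rw [hx, abs_of_nonneg (arctan_nonneg.2 h0)]
  · rw [hx, arctan_neg, abs_of_neg (arctan_lt_zero.2 h0)]

theorem le_tan_of_arctan_le {x φ : ℝ} (hφ : φ < π / 2) (h : arctan x ≤ φ) : x ≤ Real.tan φ := by
  rw [← tan_arctan x]
  exact strictMonoOn_tan.monotoneOn ⟨neg_pi_div_two_lt_arctan x, arctan_lt_pi_div_two x⟩
    ⟨by linarith [neg_pi_div_two_lt_arctan x], hφ⟩ h

end Trigonometry

theorem IsRegularizer.abs_le_one_of_pos {ζ : ℝ → ℝ} (hζ : IsRegularizer ζ) {t : ℝ}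
    (ht : 0 < ζ t) : |t| ≤ 1 := by
  obtain ⟨-, -, heven, hsupp, -, -⟩ := hζ
  by_contra! h
  rcases lt_abs.1 h with h | h
  · exact ht.ne' (hsupp t h)
  · exact ht.ne' (heven t ▸ hsupp (-t) h)

theorem IsRegularizer.abs_le_of_mul_pos {ζ : ℝ → ℝ} (hζ : IsRegularizer ζ) {δ s t : ℝ}
    (hδ : 0 < δ) (h : 0 < ζ (s / δ) * ζ (t / δ)) : |s| ≤ δ ∧ |t| ≤ δ := by
  have hs := hζ.abs_le_one_of_pos (pos_of_mul_pos_left h (hζ.2.1 _).1)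
  have ht := hζ.abs_le_one_of_pos (pos_of_mul_pos_right h (hζ.2.1 _).1)
  rw [abs_div, abs_of_pos hδ, div_le_one hδ] at hs ht
  exact ⟨hs, ht⟩

section DiscreteCurve

open Finset Function Real intervalIntegral

variable {N : ℕ} {v : ℤ → ℝ}

theorem xj_sub_xj_sub_one (N : ℕ) (j : ℤ) : xj N j - xj N (j - 1) = 1 / N := by
  simp only [xj]; push_cast; ring

theorem xj_sub_one_le_xj (N : ℕ) (j : ℤ) : xj N (j - 1) ≤ xj N j := by
  have := xj_sub_xj_sub_one N j
  have : (0 : ℝ) ≤ 1 / N := by positivity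
  linarith

theorem dq_periodic (hv : Periodic v N) : Periodic (dq N v) N := fun j => by
  simp only [dq, hv j, show j + N - 1 = j - 1 + N by ring, hv (j - 1)]

theorem lq_pos (hN : 0 < N) (j : ℤ) : 0 < lq N v j := by
  unfold lq; positivity

theorem two_mul_lq_eq_sqrt (hN : 0 < N) (j : ℤ) :
    2 * lq N v j = √((1 / N) ^ 2 + (v j - v (j - 1)) ^ 2) := by
  have hdv : v j - v (j - 1) = 1 / N * dq N v j := by
    simp only [dq]; field_simp
  rw [hdv, mul_pow, ← mul_one_add, sqrt_mul (by positivity), sqrt_sq (by positivity), lq]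
  ring

theorem θq_eq_abs_arctan_sub (j : ℤ) :
    θq N v j = |arctan (dq N v (j + 1)) - arctan (dq N v j)| :=
  arccos_div_sqrt_eq_abs_arctan_sub _ _

theorem Bh_nonneg {C : ℝ} (hC : 0 ≤ C) (hN : 0 < N) : 0 ≤ Bh C N v := by
  have hl := lq_pos (v := v) hN
  unfold Bh
  refine mul_nonneg (by positivity) (sum_nonneg fun j _ => ?_)
  have := hl j
  have := hl (j + 1)
  positivity

theorem Ph_nonneg {ρ : ℝ} {ψ : ℝ → ℝ} (hρ : 0 ≤ ρ) : 0 ≤ Ph ρ ψ N v := by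
  unfold Ph; positivity

theorem one_div_add_le_bending_weight {a b : ℝ} (ha : 0 < a) (hb : 0 < b) :
    1 / (a + b) ≤ (a ^ 3 + b ^ 3) / (a * b * (a + b) ^ 2) := by
  rw [div_le_div_iff₀ (by positivity) (by positivity)]
  nlinarith [mul_nonneg (add_pos ha hb).le (sq_nonneg (a - b))]

theorem mul_sq_sum_θq_le {C : ℝ} (hC : 0 < C) (hN : 0 < N) (hv : Periodic v N) :
    C * (∑ j ∈ Icc (1 : ℤ) N, θq N v j) ^ 2 ≤ 4 * Bh C N v * ∑ j ∈ Icc (1 : ℤ) N, lq N v j := by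
  have hl := lq_pos (v := v) hN
  have hlper : Periodic (lq N v) N := fun j => by simp only [lq, dq_periodic hv j]
  have hpair : ∑ j ∈ Icc (1 : ℤ) N, (lq N v j + lq N v (j + 1)) =
      2 * ∑ j ∈ Icc (1 : ℤ) N, lq N v j := by
    rw [sum_add_distrib, hlper.sum_Icc_comp_add_one]; ring
  have hpos : 0 < ∑ j ∈ Icc (1 : ℤ) N, lq N v j :=
    sum_pos (fun j _ => hl j) (nonempty_Icc.2 (by omega))
  -- Titu's lemma with the weights `l_j + l_{j+1}`, each dominating the reciprocal bending weight
  have htitu := sq_sum_div_le_sum_sq_div (Icc (1 : ℤ) N) (θq N v)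
    (g := fun j => lq N v j + lq N v (j + 1)) fun j _ => add_pos (hl j) (hl (j + 1))
  set W := ∑ j ∈ Icc (1 : ℤ) N, θq N v j ^ 2 * ((lq N v j ^ 3 + lq N v (j + 1) ^ 3) /
    (lq N v j * lq N v (j + 1) * (lq N v j + lq N v (j + 1)) ^ 2))
  have hB : Bh C N v = C / 2 * W := rfl
  have hweight : ∑ j ∈ Icc (1 : ℤ) N, θq N v j ^ 2 / (lq N v j + lq N v (j + 1)) ≤ W :=
    sum_le_sum fun j _ => (div_eq_mul_one_div _ _).trans_le
      (mul_le_mul_of_nonneg_left (one_div_add_le_bending_weight (hl j) (hl (j + 1))) (sq_nonneg _))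
  rw [hpair, div_le_iff₀ (by positivity)] at htitu
  calc C * (∑ j ∈ Icc (1 : ℤ) N, θq N v j) ^ 2
      ≤ C * (W * (2 * ∑ j ∈ Icc (1 : ℤ) N, lq N v j)) :=
        mul_le_mul_of_nonneg_left (htitu.trans (by gcongr)) hC.le
    _ = 4 * Bh C N v * ∑ j ∈ Icc (1 : ℤ) N, lq N v j := by rw [hB]; ring

theorem sum_θq_mul_sqrt_le {C σ : ℝ} (hC : 0 < C) (hσ : 0 < σ) (hN : 0 < N)
    (hv : Periodic v N) :
    (∑ j ∈ Icc (1 : ℤ) N, θq N v j) * √(2 * C * σ) ≤ Bh C N v + Th σ N v := by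
  set Λ := ∑ j ∈ Icc (1 : ℤ) N, lq N v j
  have hT : Th σ N v = 2 * σ * Λ := by rw [Th, ← mul_sum]; ring
  have hΛ : 0 ≤ Λ := sum_nonneg fun j _ => (lq_pos hN j).le
  have hS : 0 ≤ ∑ j ∈ Icc (1 : ℤ) N, θq N v j := sum_nonneg fun j _ => arccos_nonneg _
  have hB := Bh_nonneg (v := v) hC.le hN
  have hbend := mul_le_mul_of_nonneg_left (mul_sq_sum_θq_le hC hN hv) (by positivity : 0 ≤ 2 * σ)
  refine le_of_pow_le_pow_left₀ two_ne_zero (add_nonneg hB (by rw [hT]; positivity)) ?_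
  rw [mul_pow, sq_sqrt (by positivity), hT]
  -- AM-GM: `4 B (2σΛ) ≤ (B + 2σΛ)²`
  nlinarith [sq_nonneg (Bh C N v - 2 * σ * Λ)]

theorem sum_integral_xj (hN : 0 < N) {F : ℝ → ℝ} (hF : Continuous F) :
    ∑ j ∈ Icc (1 : ℤ) N, ∫ x in xj N (j - 1)..xj N j, F x = ∫ x in (0 : ℝ)..1, F x := by
  have htel := sum_Ico_add_one_sub_int (fun i => ∫ x in (0 : ℝ)..xj N (i - 1), F x)
    (show (1 : ℤ) ≤ N + 1 by omega)
  simp only [add_sub_cancel_right, Ico_add_one_right_eq_Icc, sub_self] at htel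
  have hxN : xj N N = 1 := by simp only [xj, Int.cast_natCast]; field_simp
  have hx0 : xj N 0 = 0 := by simp [xj]
  rw [hxN, hx0, integral_same, sub_zero] at htel
  rw [← htel]
  exact sum_congr rfl fun j _ =>
    (integral_interval_sub_left (hF.intervalIntegrable _ _) (hF.intervalIntegrable _ _)).symm

theorem arctan_abs_dq_le (hN : 0 < N) (hv : Periodic v N) (i j : ℤ) :
    arctan |dq N v j| ≤ (∑ k ∈ Icc (1 : ℤ) N, θq N v k) + arctan |dq N v i| := by
  have hosc := ((dq_periodic hv).comp arctan).abs_sub_le_sum_Icc hN i j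
  simp only [comp_apply, ← θq_eq_abs_arctan_sub] at hosc
  rw [← abs_arctan, ← abs_arctan]
  linarith [abs_sub_abs_le_abs_sub (arctan (dq N v j)) (arctan (dq N v i))]

end DiscreteCurve

section Obstacle

open Finset Real intervalIntegral

variable {N : ℕ} {v : ℤ → ℝ} {ψ : ℝ → ℝ} {δ : ℝ} {j : ℤ}

theorem two_mul_lq_le_integral_add (hψ : ContDiff ℝ 1 ψ) (hN : 0 < N)
    (hj₀ : |v (j - 1) - ψ (xj N (j - 1))| ≤ δ) (hj : |v j - ψ (xj N j)| ≤ δ) :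
    2 * lq N v j ≤ (∫ x in xj N (j - 1)..xj N j, √(1 + deriv ψ x ^ 2)) + 2 * δ := by
  have hchord := sqrt_sq_add_sq_le_integral_sqrt_one_add_deriv_sq hψ (xj_sub_one_le_xj N j)
  rw [xj_sub_xj_sub_one] at hchord
  have hdev : |v j - v (j - 1) - (ψ (xj N j) - ψ (xj N (j - 1)))| ≤ 2 * δ := by
    rw [abs_le] at *; constructor <;> linarith
  rw [two_mul_lq_eq_sqrt hN]
  linarith [sqrt_sq_add_sq_le_sqrt_sq_add_sq_add_abs_sub (1 / N) (v j - v (j - 1))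
    (ψ (xj N j) - ψ (xj N (j - 1)))]

theorem Ah_le {γ : ℝ} {ζ : ℝ → ℝ} (hγ : 0 ≤ γ) (hζ : IsRegularizer ζ) (hδ : 0 < δ)
    (hψ : ContDiff ℝ 1 ψ) (hN : 0 < N) :
    Ah γ ζ δ ψ N v ≤ γ * ((∫ x in (0 : ℝ)..1, √(1 + deriv ψ x ^ 2)) + 2 * N * δ) := by
  have hcont : Continuous fun x => √(1 + deriv ψ x ^ 2) := by
    have := hψ.continuous_deriv le_rfl
    fun_prop
  have hterm : ∀ j, ζ ((v (j - 1) - ψ (xj N (j - 1))) / δ) * ζ ((v j - ψ (xj N j)) / δ) *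
      (2 * lq N v j) ≤ (∫ x in xj N (j - 1)..xj N j, √(1 + deriv ψ x ^ 2)) + 2 * δ := by
    intro j
    have h₀ := hζ.2.1 ((v (j - 1) - ψ (xj N (j - 1))) / δ)
    have h₁ := hζ.2.1 ((v j - ψ (xj N j)) / δ)
    rcases (mul_nonneg h₀.1 h₁.1).eq_or_lt with hzero | hpos
    · rw [← hzero, zero_mul]
      have : 0 ≤ ∫ x in xj N (j - 1)..xj N j, √(1 + deriv ψ x ^ 2) :=
        integral_nonneg (xj_sub_one_le_xj N j) fun x _ => sqrt_nonneg _
      linarith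
    · obtain ⟨hj₀, hj⟩ := hζ.abs_le_of_mul_pos hδ hpos
      calc _ ≤ 1 * (2 * lq N v j) := by
            gcongr
            · exact (mul_pos two_pos (lq_pos hN j)).le
            · exact mul_le_one₀ h₀.2 h₁.1 h₁.2
        _ ≤ _ := (one_mul _).trans_le (two_mul_lq_le_integral_add hψ hN hj₀ hj)
  rw [Ah]
  gcongr
  refine (sum_le_sum fun j _ => hterm j).trans_eq ?_
  rw [sum_add_distrib, sum_integral_xj hN hcont, sum_const, Int.card_Icc, add_sub_cancel_right,
    Int.toNat_natCast, nsmul_eq_mul]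
  ring

theorem abs_dq_le_of_abs_sub_le {M : ℝ} (hψ : Differentiable ℝ ψ) (hM : ∀ x, |deriv ψ x| ≤ M)
    (hN : 0 < N) (hj₀ : |v (j - 1) - ψ (xj N (j - 1))| ≤ δ) (hj : |v j - ψ (xj N j)| ≤ δ) :
    |dq N v j| ≤ M + 2 * δ * N := by
  have hh : 0 < (1 : ℝ) / N := one_div_pos.2 (Nat.cast_pos.2 hN)
  have hlip : |ψ (xj N j) - ψ (xj N (j - 1))| ≤ M * (1 / N) := by
    have := Convex.norm_image_sub_le_of_norm_deriv_le (fun x _ => hψ x) (fun x _ => hM x)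
      convex_univ (Set.mem_univ (xj N (j - 1))) (Set.mem_univ (xj N j))
    rwa [Real.norm_eq_abs, Real.norm_eq_abs, xj_sub_xj_sub_one, abs_of_pos hh] at this
  have hdiff : |v j - v (j - 1)| ≤ M * (1 / N) + 2 * δ := by
    rw [abs_le] at *; constructor <;> linarith
  rw [dq, abs_div, abs_of_pos hh, div_le_iff₀ hh]
  calc _ ≤ M * (1 / N) + 2 * δ := hdiff
    _ = (M + 2 * δ * N) * (1 / N) := by field_simp

end Obstacle

/-- Uniform slope bound under the sufficient condition for global optimization. -/
theorem stmt15 (ψ : ℝ → ℝ) (hψ : ContDiff ℝ 1 ψ) (hψper : ∀ x, ψ (x + 1) = ψ x)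
    (C σ γ c₀ : ℝ) (hC : 0 < C) (hσ : 0 < σ) (hγ : 0 < γ) (hc₀ : 0 < c₀)
    (ζ : ℝ → ℝ) (hζ : IsRegularizer ζ)
    (N : ℕ) (hN : 1 ≤ N) (δ ρ : ℝ) (hδpos : 0 < δ) (hδ : δ ≤ c₀ * ((1 : ℝ) / N))
    (hρ : 0 < ρ)
    (φbar : ℝ) (hφbar : φbar ∈ Set.Ioo 0 (Real.pi / 2))
    (hcond : 1 / Real.sqrt (2 * C * σ) *
        (σ + 4 * γ * ((∫ x in Set.Ioo (0 : ℝ) 1, Real.sqrt (1 + deriv ψ x ^ 2)) + c₀)) +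
        Real.arctan (sSup ((fun x => |deriv ψ x|) '' Set.Icc (0 : ℝ) 1) + 2 * c₀) ≤ φbar)
    (v : ℤ → ℝ) (hper : ∀ j, v (j + N) = v j)
    (hE : Eh C σ γ ζ ψ N δ ρ v ≤ σ)
    (hadh : ∃ j₁ : ℤ, 0 < ζ ((v (j₁ - 1) - ψ (xj N (j₁ - 1))) / δ) *
      ζ ((v j₁ - ψ (xj N j₁)) / δ)) :
    ∀ j, |dq N v j| ≤ Real.tan φbar := by
  intro j
  obtain ⟨j₁, hj₁⟩ := hadh
  obtain ⟨hj₀, hj⟩ := hζ.abs_le_of_mul_pos hδpos hj₁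
  set I := ∫ x in Set.Ioo (0 : ℝ) 1, √(1 + deriv ψ x ^ 2)
  set M := sSup ((fun x => |deriv ψ x|) '' Set.Icc (0 : ℝ) 1)
  have hI : ∫ x in (0 : ℝ)..1, √(1 + deriv ψ x ^ 2) = I := by
    rw [intervalIntegral.integral_of_le zero_le_one, integral_Ioc_eq_integral_Ioo]
  have hI₀ : 0 ≤ I := setIntegral_nonneg measurableSet_Ioo fun _ _ => Real.sqrt_nonneg _
  have hδN : δ * N ≤ c₀ := by rwa [mul_one_div, le_div_iff₀ (by exact_mod_cast hN)] at hδ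
  have hturn : (∑ k ∈ Finset.Icc (1 : ℤ) N, θq N v k) * √(2 * C * σ) ≤ σ + 4 * γ * (I + c₀) := by
    have hA := hI ▸ Ah_le (v := v) hγ.le hζ hδpos hψ hN
    have hP : 0 ≤ Ph ρ ψ N v := Ph_nonneg hρ.le
    rw [Eh] at hE
    nlinarith [sum_θq_mul_sqrt_le hC hσ hN hper]
  have hM : ∀ x, |deriv ψ x| ≤ M := Function.Periodic.le_sSup_image_Icc
    (fun x => congrArg abs (Function.Periodic.deriv hψper x)) one_pos
    (hψ.continuous_deriv le_rfl).abs
  have hslope := abs_dq_le_of_abs_sub_le (hψ.differentiable one_ne_zero) hM hN hj₀ hj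
  refine le_tan_of_arctan_le hφbar.2 ((arctan_abs_dq_le hN hper j₁ j).trans (le_trans ?_ hcond))
  gcongr
  · rw [one_div_mul_eq_div, le_div_iff₀ (by positivity)]
    exact hturn
  · linarith
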